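/- arXiv:2602.14499 — 8 statements merged into one kernel-verified Lean document; each statement's English description precedes it below -/
import Mathlib

section
/- Suppose H_X H_Z^T = 0 (mod 2^{m+1}) and θ ∈ Z^n satisfies H_X θ ≡ 0 (mod 2^m). Then there exists θ̂ ∈ Z^n with θ̂ ≡ θ (mod 2^m) (up to adding an element of Im H_Z^T mod 2^m) and H_X θ̂ ≡ 0 (mod 2^{m+1}) if and only if the vector r := (H_X θ)/2^m mod 2 lies in the image of H_X over Z/2Z. -/
/-- Bockstein obstruction theorem: a lift `θ̂ = θ + H_Zᵀ s + 2^m ω` with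
`H_X θ̂ ≡ 0 (mod 2^(m+1))` exists if and only if the residual defect
`r = (H_X θ)/2^m mod 2` lies in the image of `H_X` over `ℤ/2`. -/
theorem stmt2 (mX mZ n m : ℕ) (hm : 1 ≤ m)
    (HX : Matrix (Fin mX) (Fin n) ℤ) (HZ : Matrix (Fin mZ) (Fin n) ℤ)
    (hcomm : ∀ i k, (2 ^ (m + 1) : ℤ) ∣ (HX * HZ.transpose) i k)
    (θ : Fin n → ℤ) (hθ : ∀ i, (2 ^ m : ℤ) ∣ HX.mulVec θ i) :
    (∃ θhat : Fin n → ℤ, ∃ s : Fin mZ → ℤ, ∃ ω : Fin n → ℤ,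
        θhat = θ + HZ.transpose.mulVec s + (2 ^ m : ℤ) • ω ∧
        ∀ i, (2 ^ (m + 1) : ℤ) ∣ HX.mulVec θhat i)
      ↔
    (∃ ω : Fin n → ℤ, ∀ i,
        (2 : ℤ) ∣ (HX.mulVec θ) i / 2 ^ m - HX.mulVec ω i) := by
  have hpow : (0:ℤ) < 2 ^ m := by positivity
  constructor
  · rintro ⟨θhat, s, ω, rfl, hdiv⟩
    refine ⟨ω, fun i => ?_⟩
    have hexp : HX.mulVec (θ + HZ.transpose.mulVec s + (2 ^ m : ℤ) • ω) i
        = HX.mulVec θ i + (HX * HZ.transpose).mulVec s i + 2 ^ m * HX.mulVec ω i := by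
      rw [Matrix.mulVec_add, Matrix.mulVec_add, Matrix.mulVec_smul, Matrix.mulVec_mulVec]
      simp [smul_eq_mul]
    obtain ⟨a, ha⟩ := hθ i
    have hmid : (2 ^ (m + 1) : ℤ) ∣ (HX * HZ.transpose).mulVec s i := by
      simp only [Matrix.mulVec, dotProduct]
      apply Finset.dvd_sum
      intro k _
      exact Dvd.dvd.mul_right (hcomm i k) _
    obtain ⟨c, hc⟩ := hmid
    obtain ⟨b, hb⟩ := hdiv i
    rw [hexp, ha, hc] at hb
    have hdivq : HX.mulVec θ i / 2 ^ m = a := by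
      rw [ha]; exact Int.mul_ediv_cancel_left _ hpow.ne'
    rw [hdivq]
    set w := HX.mulVec ω i with hw
    have key : a + 2 * c + w = 2 * b := by
      apply mul_left_cancel₀ hpow.ne'
      rw [pow_succ] at hb
      ring_nf
      ring_nf at hb
      linarith
    exact ⟨b - c - w, by linarith⟩
  · rintro ⟨ω, hω⟩
    refine ⟨θ + HZ.transpose.mulVec 0 + (2 ^ m : ℤ) • (-ω), 0, -ω, rfl, fun i => ?_⟩
    have hexp : HX.mulVec (θ + HZ.transpose.mulVec 0 + (2 ^ m : ℤ) • (-ω)) i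
        = HX.mulVec θ i - 2 ^ m * HX.mulVec ω i := by
      rw [Matrix.mulVec_add, Matrix.mulVec_add, Matrix.mulVec_smul, Matrix.mulVec_neg,
        Matrix.mulVec_zero]
      simp [smul_eq_mul]
      ring
    obtain ⟨a, ha⟩ := hθ i
    obtain ⟨b, hb⟩ := hω i
    have hdivq : HX.mulVec θ i / 2 ^ m = a := by
      rw [ha]; exact Int.mul_ediv_cancel_left _ hpow.ne'
    rw [hdivq] at hb
    rw [hexp, ha]
    refine ⟨b, ?_⟩
    rw [pow_succ]
    linear_combination (2:ℤ) ^ m * hb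
end

section
/- Let H_X, H_Z be integer matrices with H_X H_Z^T ≡ 0 (mod 2^{m+1}) and suppose the mod-2 reduction of H_X has linearly independent rows. Then for every θ ∈ Z^n with H_X θ ≡ 0 (mod 2^m), there exists θ̂ ∈ Z^n with θ̂ ≡ θ (mod 2^m) and H_X θ̂ ≡ 0 (mod 2^{m+1}). -/
lemma aux_surj {mX n : ℕ} (A : Matrix (Fin mX) (Fin n) (ZMod 2))
    (h : LinearIndependent (ZMod 2) (fun i => A i)) :
    Function.Surjective A.mulVecLin := by
  rw [← LinearMap.range_eq_top]
  apply Submodule.eq_top_of_finrank_eq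
  have : A.rank = mX := by simpa using h.rank_matrix
  simpa [Matrix.rank] using this

/-- Linearly independent X-stabilizers plus commutativity mod `2^(m+1)` imply every
mod-`2^m` cycle lifts to a mod-`2^(m+1)` cycle. -/
theorem stmt5 (mX mZ n m : ℕ) (hm : 1 ≤ m)
    (HX : Matrix (Fin mX) (Fin n) ℤ) (HZ : Matrix (Fin mZ) (Fin n) ℤ)
    (hrows : LinearIndependent (ZMod 2)
      (fun i => (HX.map (Int.cast : ℤ → ZMod 2)) i))
    (hcomm : ∀ i k, (2 ^ (m + 1) : ℤ) ∣ (HX * HZ.transpose) i k)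
    (θ : Fin n → ℤ) (hθ : ∀ i, (2 ^ m : ℤ) ∣ HX.mulVec θ i) :
    ∃ θhat : Fin n → ℤ,
      (∀ j, (2 ^ m : ℤ) ∣ θhat j - θ j) ∧
      (∀ i, (2 ^ (m + 1) : ℤ) ∣ HX.mulVec θhat i) := by
  set A := HX.map (Int.cast : ℤ → ZMod 2) with hA
  -- c is the quotient of HXθ by 2^m
  choose c hc using hθ
  obtain ⟨v, hv⟩ := aux_surj A hrows (-(fun i => ((c i : ℤ) : ZMod 2)))
  refine ⟨fun j => θ j + 2 ^ m * ((v j).val : ℤ), fun j => ⟨(v j).val, by ring⟩, fun i => ?_⟩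
  have hmul : HX.mulVec (fun j => θ j + 2 ^ m * ((v j).val : ℤ)) i
      = 2 ^ m * (c i + HX.mulVec (fun j => ((v j).val : ℤ)) i) := by
    simp only [Matrix.mulVec, dotProduct, mul_add]
    rw [Finset.sum_add_distrib, ← hc i, Finset.mul_sum]
    congr 1
    exact Finset.sum_congr rfl fun x _ => by ring
  rw [hmul, pow_succ]
  -- need 2 ∣ c i + HX.mulVec w i
  have h2 : (2 : ℤ) ∣ (c i + HX.mulVec (fun j => ((v j).val : ℤ)) i) := by
    have := congr_fun hv i
    have hcast : ((c i + HX.mulVec (fun j => ((v j).val : ℤ)) i : ℤ) : ZMod 2) = 0 := by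
      push_cast
      have hw : (((HX.mulVec (fun j => ((v j).val : ℤ)) i) : ℤ) : ZMod 2)
          = A.mulVec v i := by
        simp only [Matrix.mulVec, dotProduct, hA, Matrix.map_apply]
        push_cast
        refine Finset.sum_congr rfl fun j _ => ?_
        simp [ZMod.natCast_val, ZMod.intCast_cast, ZMod.cast_id]
      rw [hw]
      have : A.mulVec v i = -((c i : ℤ) : ZMod 2) := by
        simpa [Matrix.mulVecLin] using this
      rw [this]; push_cast; ring
    exact_mod_cast (ZMod.intCast_zmod_eq_zero_iff_dvd _ 2).mp hcast
  exact mul_dvd_mul dvd_rfl h2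
end

section
/- Let H_X be an integer matrix whose mod-2 reduction has linearly independent rows and assume H_X H_Z^T ≡ 0 (mod 2^{m+1}). Then for every θ_1 ∈ Z^n with H_X θ_1 ≡ 0 (mod 2), there exists a sequence θ_1, θ_2, ..., θ_{m+1} in Z^n with θ_{i+1} ≡ θ_i (mod 2^i) and H_X θ_i ≡ 0 (mod 2^i) for all i = 1, ..., m+1. -/
open Matrix

theorem Matrix.mulVec_surjective_of_linearIndependent_row {K m n : Type*} [Field K]
    [Fintype m] [Fintype n] {M : Matrix m n K} (h : LinearIndependent K M.row) :
    Function.Surjective M.mulVec := by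
  have htop : LinearMap.range M.mulVecLin = ⊤ :=
    Submodule.eq_top_of_finrank_eq <| by
      rw [← Matrix.rank, h.rank_matrix, Module.finrank_fintype_fun_eq_card]
  exact fun v ↦ LinearMap.range_eq_top.mp htop v

/-- Hensel-type lifting: a solution of `H θ ≡ 0 (mod p^i)` is corrected by `p^i y` into one modulo
`p^(i+1)`, where `y` solves `H y ≡ -H θ / p^i (mod p)`; this is solvable since `H` has full row
rank modulo `p`. -/
theorem exists_mulVec_dvd_pow_succ_of_mulVec_dvd_pow {m n : Type*} [Fintype m] [Fintype n]
    {p : ℕ} [Fact p.Prime] {H : Matrix m n ℤ}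
    (hH : LinearIndependent (ZMod p) (H.map (Int.cast : ℤ → ZMod p)).row)
    {i : ℕ} {θ : n → ℤ} (hθ : ∀ k, (p ^ i : ℤ) ∣ (H *ᵥ θ) k) :
    ∃ θ' : n → ℤ, (∀ j, (p ^ i : ℤ) ∣ θ' j - θ j) ∧ ∀ k, (p ^ (i + 1) : ℤ) ∣ (H *ᵥ θ') k := by
  choose v hv using hθ
  obtain ⟨x, hx⟩ := Matrix.mulVec_surjective_of_linearIndependent_row hH
    (fun k ↦ -(v k : ZMod p))
  set y : n → ℤ := fun j ↦ ((x j).val : ℤ)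
  have hy : (Int.castRingHom (ZMod p)) ∘ y = x := funext fun j ↦ by simp [y]
  refine ⟨θ + (p ^ i : ℤ) • y, fun j ↦ by simp, fun k ↦ ?_⟩
  have hcorr : ((v k + (H *ᵥ y) k : ℤ) : ZMod p) = 0 := by
    have := congrFun hx k
    rw [Int.cast_add, ← eq_intCast (Int.castRingHom (ZMod p)) ((H *ᵥ y) k),
      RingHom.map_mulVec, hy]
    simp [this]
  rw [mulVec_add, mulVec_smul, Pi.add_apply, Pi.smul_apply, hv k, smul_eq_mul, ← mul_add,
    pow_succ]
  exact mul_dvd_mul_left _ ((ZMod.intCast_zmod_eq_zero_iff_dvd _ p).mp hcorr)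

theorem exists_seq_of_forall_exists_succ {α : Type*} {P : ℕ → α → Prop}
    {R : ℕ → α → α → Prop} (step : ∀ i a, P i a → ∃ b, R i a b ∧ P (i + 1) b)
    {a₀ : α} (h₀ : P 0 a₀) :
    ∃ S : ℕ → α, S 0 = a₀ ∧ ∀ i, R i (S i) (S (i + 1)) ∧ P i (S i) := by
  choose! f hf using step
  let S : ℕ → α := fun i ↦ Nat.rec a₀ f i
  have hP : ∀ i, P i (S i) := fun i ↦ by
    induction i with
    | zero => exact h₀
    | succ i ih => exact (hf i (S i) ih).2
  exact ⟨S, rfl, fun i ↦ ⟨(hf i (S i) (hP i)).1, hP i⟩⟩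

theorem stmt6_general (mX n m : ℕ)
    (HX : Matrix (Fin mX) (Fin n) ℤ)
    (hrows : LinearIndependent (ZMod 2)
      (fun i => (HX.map (Int.cast : ℤ → ZMod 2)) i))
    (θ1 : Fin n → ℤ) (hθ1 : ∀ i, (2 : ℤ) ∣ HX.mulVec θ1 i) :
    ∃ T : ℕ → (Fin n → ℤ),
      T 1 = θ1 ∧
      (∀ i, 1 ≤ i → i ≤ m → ∀ j, (2 ^ i : ℤ) ∣ T (i + 1) j - T i j) ∧
      (∀ i, 1 ≤ i → i ≤ m + 1 → ∀ k, (2 ^ i : ℤ) ∣ HX.mulVec (T i) k) := by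
  obtain ⟨S, hS0, hS⟩ := exists_seq_of_forall_exists_succ
    (P := fun i θ ↦ ∀ k, ((2 : ℕ) ^ (i + 1) : ℤ) ∣ HX.mulVec θ k)
    (R := fun i θ θ' ↦ ∀ j, ((2 : ℕ) ^ (i + 1) : ℤ) ∣ θ' j - θ j)
    (fun i _ ↦ exists_mulVec_dvd_pow_succ_of_mulVec_dvd_pow hrows) (a₀ := θ1) (by simpa using hθ1)
  refine ⟨fun i ↦ S (i - 1), hS0, ?_, ?_⟩
  · rintro (_ | i) hi - j
    · omega
    · simpa using (hS i).1 j
  · rintro (_ | i) hi - k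
    · omega
    · simpa using (hS i).2 k

/-- Iterated multi-level lifting: with linearly independent rows of `H_X` mod 2 and
commutativity mod `2^(m+1)`, any mod-2 cycle extends to a sequence of compatible
mod-`2^i` cycles for `i = 1, …, m+1`. -/
theorem stmt6 (mX mZ n m : ℕ) (hm : 1 ≤ m)
    (HX : Matrix (Fin mX) (Fin n) ℤ) (HZ : Matrix (Fin mZ) (Fin n) ℤ)
    (hrows : LinearIndependent (ZMod 2)
      (fun i => (HX.map (Int.cast : ℤ → ZMod 2)) i))
    (hcomm : ∀ i k, (2 ^ (m + 1) : ℤ) ∣ (HX * HZ.transpose) i k)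
    (θ1 : Fin n → ℤ) (hθ1 : ∀ i, (2 : ℤ) ∣ HX.mulVec θ1 i) :
    ∃ T : ℕ → (Fin n → ℤ),
      T 1 = θ1 ∧
      (∀ i, 1 ≤ i → i ≤ m → ∀ j, (2 ^ i : ℤ) ∣ T (i + 1) j - T i j) ∧
      (∀ i, 1 ≤ i → i ≤ m + 1 → ∀ k, (2 ^ i : ℤ) ∣ HX.mulVec (T i) k) :=
  stmt6_general mX n m HX hrows θ1 hθ1
end

section
/- Let θ_a, γ_b ∈ Z^n with ⟨θ_a, γ_b⟩ ≡ δ_{ab} (mod 2^m) for b ranging over a finite index set, where δ_{ab} is 1 if a = b and 0 otherwise. Suppose θ̂_a ∈ Z^n satisfies θ̂_a ≡ θ_a (mod 2^m), H_X θ̂_a ≡ 0 (mod 2^{m+1}), and suppose there exist vectors w_b ∈ ker(H_X mod 2) ⊂ (Z/2)^n with ⟨w_b, γ_c⟩ ≡ δ_{bc} (mod 2). Then there exists θ̂'_a ∈ Z^n with θ̂'_a ≡ θ_a (mod 2^m), H_X θ̂'_a ≡ 0 (mod 2^{m+1}), and ⟨θ̂'_a, γ_b⟩ ≡ δ_{ab}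 (mod 2^{m+1}) for all b. -/
/-- Inner-product preservation: a lift can be corrected, using kernel vectors `w_b` dual to
the logical basis `γ_b`, so that its inner products with the `γ_b` are exactly `δ_{ab}`
modulo `2^(m+1)`. -/
theorem stmt7 (mX n m : ℕ) (hm : 1 ≤ m)
    (ι : Type) [Fintype ι] [DecidableEq ι]
    (HX : Matrix (Fin mX) (Fin n) ℤ)
    (a : ι) (θ : Fin n → ℤ) (γ : ι → Fin n → ℤ)
    (hpair : ∀ b, (2 ^ m : ℤ) ∣ (∑ j, θ j * γ b j) - (if a = b then 1 else 0))
    (θhat : Fin n → ℤ)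
    (hlift : ∀ j, (2 ^ m : ℤ) ∣ θhat j - θ j)
    (hcycle : ∀ i, (2 ^ (m + 1) : ℤ) ∣ HX.mulVec θhat i)
    (w : ι → Fin n → ℤ)
    (hwker : ∀ b i, (2 : ℤ) ∣ HX.mulVec (w b) i)
    (hwdual : ∀ b c, (2 : ℤ) ∣ (∑ j, w b j * γ c j) - (if b = c then 1 else 0)) :
    ∃ θhat' : Fin n → ℤ,
      (∀ j, (2 ^ m : ℤ) ∣ θhat' j - θ j) ∧
      (∀ i, (2 ^ (m + 1) : ℤ) ∣ HX.mulVec θhat' i) ∧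
      (∀ b, (2 ^ (m + 1) : ℤ) ∣ (∑ j, θhat' j * γ b j) - (if a = b then 1 else 0)) := by
  classical
  have hdiv : ∀ b, (2 ^ m : ℤ) ∣ (∑ j, θhat j * γ b j) - (if a = b then 1 else 0) := by
    intro b
    have h1 : (2 ^ m : ℤ) ∣ (∑ j, θhat j * γ b j) - (∑ j, θ j * γ b j) := by
      rw [← Finset.sum_sub_distrib]
      refine Finset.dvd_sum fun j _ => ?_
      rw [← sub_mul]
      exact Dvd.dvd.mul_right (hlift j) _
    have := dvd_add h1 (hpair b)
    simpa using this
  choose e he using hdiv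
  choose s hs using hwdual
  refine ⟨fun j => θhat j - 2 ^ m * ∑ c, e c * w c j, ?_, ?_, ?_⟩
  · intro j
    have : θhat j - 2 ^ m * ∑ c, e c * w c j - θ j
        = (θhat j - θ j) + 2 ^ m * (-(∑ c, e c * w c j)) := by ring
    rw [this]
    exact dvd_add (hlift j) (Dvd.intro _ rfl)
  · intro i
    have hmv : HX.mulVec (fun j => θhat j - 2 ^ m * ∑ c, e c * w c j) i
        = HX.mulVec θhat i - 2 ^ m * ∑ c, e c * HX.mulVec (w c) i := by
      simp only [Matrix.mulVec, dotProduct, mul_sub, Finset.sum_sub_distrib,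
        Finset.mul_sum]
      congr 1
      rw [Finset.sum_comm]
      congr 1; ext c
      congr 1; ext j
      ring
    rw [hmv]
    refine dvd_sub (hcycle i) ?_
    have h2 : (2:ℤ) ∣ ∑ c, e c * HX.mulVec (w c) i :=
      Finset.dvd_sum fun c _ => Dvd.dvd.mul_left (hwker c i) _
    calc (2 ^ (m+1) : ℤ) = 2 ^ m * 2 := by rw [pow_succ]
    _ ∣ 2 ^ m * ∑ c, e c * HX.mulVec (w c) i := mul_dvd_mul_left _ h2
  · intro b
    have key : (∑ j, (θhat j - 2 ^ m * ∑ c, e c * w c j) * γ b j)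
        = (∑ j, θhat j * γ b j) - 2 ^ m * ∑ c, e c * (∑ j, w c j * γ b j) := by
      simp only [sub_mul, Finset.sum_sub_distrib, Finset.mul_sum, Finset.sum_mul]
      congr 1
      rw [Finset.sum_comm]
      congr 1; ext c
      congr 1; ext j
      ring
    have hswap : (∑ c, e c * (∑ j, w c j * γ b j))
        = e b + 2 * ∑ c, e c * s c b := by
      have : ∀ c, e c * (∑ j, w c j * γ b j)
          = e c * (if c = b then 1 else 0) + 2 * (e c * s c b) := by
        intro c
        have := hs c b
        have h3 : (∑ j, w c j * γ b j) = (if c = b then 1 else 0) + 2 * s c b := by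
          linarith
        rw [h3]; ring
      rw [Finset.sum_congr rfl fun c _ => this c, Finset.sum_add_distrib,
        ← Finset.mul_sum]
      congr 1
      simp [Finset.sum_ite_eq']
    rw [key]
    have heq : (∑ j, θhat j * γ b j) - 2 ^ m * (e b + 2 * ∑ c, e c * s c b)
        - (if a = b then 1 else 0) = 2 ^ (m+1) * (-(∑ c, e c * s c b)) := by
      have := he b
      rw [pow_succ]
      linarith
    rw [hswap, heq]
    exact Dvd.intro _ rfl
end

section
/- Suppose H_X H_Z^T ≡ 0 (mod 2^{m+1}). Define the map β_m from { [θ] : θ ∈ Z^n, H_X θ ≡ 0 mod 2^m } / (Im H_Z^T + 2^m Z^n) to (Z/2)^{m_X} / Im(H_X mod 2) by β_m([θ]) = [(H_X θ)/2^m mod 2]. Then β_m is a well-defined additive homomorphism: β_m([θ + θ']) = β_m([θ]) + β_m([θ']). -/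
/-- The Bockstein map `β_m([θ]) = [(H_X θ)/2^m mod 2]` is well defined on homology classes
(independent of the representative modulo `Im H_Zᵀ + 2^m ℤ^n`, up to `Im (H_X mod 2)`)
and additive. -/
theorem stmt10 (mX mZ n m : ℕ) (hm : 1 ≤ m)
    (HX : Matrix (Fin mX) (Fin n) ℤ) (HZ : Matrix (Fin mZ) (Fin n) ℤ)
    (hcomm : ∀ i k, (2 ^ (m + 1) : ℤ) ∣ (HX * HZ.transpose) i k) :
    (∀ θ θ' : Fin n → ℤ,
      (∀ i, (2 ^ m : ℤ) ∣ HX.mulVec θ i) → (∀ i, (2 ^ m : ℤ) ∣ HX.mulVec θ' i) →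
      ∀ s : Fin mZ → ℤ, ∀ u : Fin n → ℤ,
        θ' = θ + HZ.transpose.mulVec s + (2 ^ m : ℤ) • u →
        ∃ v : Fin n → ℤ, ∀ i,
          (2 : ℤ) ∣ (HX.mulVec θ') i / 2 ^ m - (HX.mulVec θ) i / 2 ^ m
            - HX.mulVec v i) ∧
    (∀ θ θ' : Fin n → ℤ,
      (∀ i, (2 ^ m : ℤ) ∣ HX.mulVec θ i) → (∀ i, (2 ^ m : ℤ) ∣ HX.mulVec θ' i) →
      ∃ v : Fin n → ℤ, ∀ i,
        (2 : ℤ) ∣ (HX.mulVec (θ + θ')) i / 2 ^ m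
          - (HX.mulVec θ) i / 2 ^ m - (HX.mulVec θ') i / 2 ^ m - HX.mulVec v i) := by
  constructor
  · intro θ θ' hθ hθ' s u hrep
    refine ⟨u, fun i => ?_⟩
    have hsd : (2 ^ (m + 1) : ℤ) ∣ HX.mulVec (HZ.transpose.mulVec s) i := by
      rw [Matrix.mulVec_mulVec]
      unfold Matrix.mulVec dotProduct
      exact Finset.dvd_sum fun k _ => Dvd.dvd.mul_right (hcomm i k) _
    have hsd' : (2 ^ m : ℤ) ∣ HX.mulVec (HZ.transpose.mulVec s) i :=
      dvd_trans (pow_dvd_pow 2 (Nat.le_succ m)) hsd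
    have hsplit : HX.mulVec θ' i
        = HX.mulVec θ i + HX.mulVec (HZ.transpose.mulVec s) i + 2 ^ m * HX.mulVec u i := by
      subst hrep
      rw [Matrix.mulVec_add, Matrix.mulVec_add, Matrix.mulVec_smul]
      simp [smul_eq_mul]
    have h2m : (0:ℤ) < 2 ^ m := by positivity
    have hdiv : HX.mulVec θ' i / 2 ^ m
        = HX.mulVec θ i / 2 ^ m + HX.mulVec (HZ.transpose.mulVec s) i / 2 ^ m
          + HX.mulVec u i := by
      rw [hsplit, Int.add_ediv_of_dvd_left (dvd_add (hθ i) hsd'),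
        Int.add_ediv_of_dvd_left (hθ i), Int.mul_ediv_cancel_left _ (ne_of_gt h2m)]
    rw [hdiv]
    ring_nf
    obtain ⟨w, hw⟩ := hsd
    have : HX.mulVec (HZ.transpose.mulVec s) i / 2 ^ m = 2 * w := by
      rw [hw, pow_succ, mul_assoc, Int.mul_ediv_cancel_left _ (ne_of_gt h2m)]
    omega
  · intro θ θ' hθ hθ'
    refine ⟨0, fun i => ?_⟩
    have hsplit : HX.mulVec (θ + θ') i = HX.mulVec θ i + HX.mulVec θ' i := by
      simp [Matrix.mulVec_add]
    rw [hsplit, Int.add_ediv_of_dvd_left (hθ i)]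
    simp
end

section
/- Suppose H_X H_Z^T ≡ 0 (mod 2^{m+1}) and θ ∈ Z^n with H_X θ ≡ 0 (mod 2^m). If θ ≡ H_Z^T s (mod 2^m) for some s ∈ Z^{m_Z} (i.e., [θ] is a boundary class), then the residual defect (H_X θ)/2^m mod 2 lies in Im(H_X mod 2); i.e., β_m vanishes on boundary classes. -/
/-- The Bockstein map vanishes on boundary classes: if `θ ≡ H_Zᵀ s (mod 2^m)`, then the
residual defect lies in `Im (H_X mod 2)`. -/
theorem stmt11 (mX mZ n m : ℕ) (hm : 1 ≤ m)
    (HX : Matrix (Fin mX) (Fin n) ℤ) (HZ : Matrix (Fin mZ) (Fin n) ℤ)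
    (hcomm : ∀ i k, (2 ^ (m + 1) : ℤ) ∣ (HX * HZ.transpose) i k)
    (θ : Fin n → ℤ) (hθ : ∀ i, (2 ^ m : ℤ) ∣ HX.mulVec θ i)
    (s : Fin mZ → ℤ)
    (hb : ∀ j, (2 ^ m : ℤ) ∣ θ j - HZ.transpose.mulVec s j) :
    ∃ ω : Fin n → ℤ, ∀ i,
      (2 : ℤ) ∣ (HX.mulVec θ) i / 2 ^ m - HX.mulVec ω i := by
  set u : Fin n → ℤ := fun j => (θ j - HZ.transpose.mulVec s j) / 2 ^ m with hu
  refine ⟨u, fun i => ?_⟩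
  have hθeq : ∀ j, θ j = HZ.transpose.mulVec s j + 2 ^ m * u j := by
    intro j
    have := Int.ediv_mul_cancel (hb j)
    simp only [hu]
    linarith [Int.ediv_mul_cancel (hb j)]
  have hdecomp : HX.mulVec θ i
      = (HX * HZ.transpose).mulVec s i + 2 ^ m * HX.mulVec u i := by
    rw [← Matrix.mulVec_mulVec]
    simp only [Matrix.mulVec, dotProduct]
    rw [Finset.mul_sum, ← Finset.sum_add_distrib]
    apply Finset.sum_congr rfl
    intro j _
    rw [hθeq j]
    simp only [Matrix.mulVec, dotProduct]
    ring
  have hcval : (HX * HZ.transpose).mulVec s i = 2 ^ (m+1) * (dotProduct (fun k => ((HX * HZ.transpose) i k) / 2 ^ (m+1)) s) := by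
    simp only [Matrix.mulVec, dotProduct]
    rw [Finset.mul_sum]
    apply Finset.sum_congr rfl
    intro k _
    obtain ⟨d, hd⟩ := hcomm i k
    rw [hd]
    rw [Int.mul_ediv_cancel_left _ (by positivity)]
    ring
  set c' := (dotProduct (fun k => ((HX * HZ.transpose) i k) / 2 ^ (m+1)) s) with hc'
  have h2m : (0:ℤ) < 2 ^ m := by positivity
  have : HX.mulVec θ i / 2 ^ m = 2 * c' + HX.mulVec u i := by
    rw [hdecomp, hcval, pow_succ]
    have : 2 ^ m * 2 * c' + 2 ^ m * HX.mulVec u i = 2 ^ m * (2 * c' + HX.mulVec u i) := by ring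
    rw [this, Int.mul_ediv_cancel_left _ (by positivity)]
  rw [this]
  exact ⟨c', by ring⟩
end

section
/- Suppose H_X has 0/1 entries, its rows are linearly independent over Z/2, and H_X H_Z^T ≡ 0 (mod 2^{m+1}). Then for every γ ∈ Z^n with H_Z γ ≡ 0 (mod 2) representing a logical class, and for every θ ∈ Z^n with H_X θ ≡ 0 (mod 2), there exists θ̂ ∈ Z^n with H_X θ̂ ≡ 0 (mod 2^{m+1}) and θ̂ ≡ θ (mod 2). -/
open Matrix in
lemma mulVec_surj_of_rows_indep {p q : ℕ} {K : Type*} [Field K]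
    (A : Matrix (Fin p) (Fin q) K)
    (h : LinearIndependent K (fun i => A i)) :
    Function.Surjective A.mulVec := by
  have hinj : Function.Injective A.vecMul := Matrix.vecMul_injective_iff.mpr h
  have hinjT : Function.Injective Aᵀ.mulVecLin := by
    intro x y hxy
    apply hinj
    simpa [← Matrix.vecMul_transpose] using hxy
  have hrankT : Aᵀ.rank = p := by
    rw [Matrix.rank, LinearMap.finrank_range_of_inj hinjT]
    simp
  have hrank : A.rank = p := by rw [← Matrix.rank_transpose]; exact hrankT
  have htop : LinearMap.range A.mulVecLin = ⊤ := by
    apply Submodule.eq_top_of_finrank_eq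
    rw [← Matrix.rank]
    simp [hrank]
  intro u
  obtain ⟨v, hv⟩ := (LinearMap.range_eq_top.mp htop) u
  exact ⟨v, hv⟩

/-- Transversal implementability: for a 0/1 CSS code with linearly independent X-stabilizers
and commutativity mod `2^(m+1)`, every mod-2 cycle `θ` (logical Z representative) refines
to a mod-`2^(m+1)` cycle `θ̂ ≡ θ (mod 2)`. -/
theorem stmt14 (mX mZ n m : ℕ) (hm : 1 ≤ m)
    (HX : Matrix (Fin mX) (Fin n) ℤ) (HZ : Matrix (Fin mZ) (Fin n) ℤ)
    (hX01 : ∀ i j, HX i j = 0 ∨ HX i j = 1)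
    (hZ01 : ∀ i j, HZ i j = 0 ∨ HZ i j = 1)
    (hrows : LinearIndependent (ZMod 2)
      (fun i => (HX.map (Int.cast : ℤ → ZMod 2)) i))
    (hcomm : ∀ i k, (2 ^ (m + 1) : ℤ) ∣ (HX * HZ.transpose) i k)
    (γ : Fin n → ℤ) (hγ : ∀ i, (2 : ℤ) ∣ HZ.mulVec γ i)
    (θ : Fin n → ℤ) (hθ : ∀ i, (2 : ℤ) ∣ HX.mulVec θ i) :
    ∃ θhat : Fin n → ℤ,
      (∀ i, (2 ^ (m + 1) : ℤ) ∣ HX.mulVec θhat i) ∧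
      (∀ j, (2 : ℤ) ∣ θhat j - θ j) := by
  set A2 : Matrix (Fin mX) (Fin n) (ZMod 2) := HX.map (Int.cast : ℤ → ZMod 2) with hA2
  have hsurj : Function.Surjective A2.mulVec := mulVec_surj_of_rows_indep A2 hrows
  -- casting lemma: mulVec commutes with reduction mod 2
  have hcast : ∀ (v : Fin n → ℤ) (i : Fin mX),
      ((HX.mulVec v i : ℤ) : ZMod 2) = A2.mulVec (fun j => ((v j : ℤ) : ZMod 2)) i := by
    intro v i
    simp [Matrix.mulVec, dotProduct, hA2, Matrix.map_apply]
  -- induction: for every k ≥ 1 there is a lift mod 2^k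
  have key : ∀ k : ℕ, ∃ θhat : Fin n → ℤ,
      (∀ i, (2 ^ (k + 1) : ℤ) ∣ HX.mulVec θhat i) ∧
      (∀ j, (2 : ℤ) ∣ θhat j - θ j) := by
    intro k
    induction k with
    | zero => exact ⟨θ, by simpa using hθ, fun j => by simp⟩
    | succ k ih =>
      obtain ⟨φ, hφ1, hφ2⟩ := ih
      -- u i = (HX φ) i / 2^(k+1)
      set u : Fin mX → ℤ := fun i => (HX.mulVec φ i) / 2 ^ (k + 1) with hu
      have hui : ∀ i, HX.mulVec φ i = 2 ^ (k + 1) * u i := by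
        intro i
        rw [hu]
        exact (Int.mul_ediv_cancel' (hφ1 i)).symm
      obtain ⟨w, hw⟩ := hsurj (fun i => ((u i : ℤ) : ZMod 2))
      set v : Fin n → ℤ := fun j => ((w j).val : ℤ) with hv
      have hvw : ∀ j, ((v j : ℤ) : ZMod 2) = w j := by
        intro j; simp [hv, ZMod.natCast_val, ZMod.intCast_cast, ZMod.intCast_zmod_cast]
      refine ⟨fun j => φ j - 2 ^ (k + 1) * v j, ?_, ?_⟩
      · intro i
        have hlin : HX.mulVec (fun j => φ j - 2 ^ (k + 1) * v j) i
            = HX.mulVec φ i - 2 ^ (k + 1) * HX.mulVec v i := by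
          simp only [Matrix.mulVec, dotProduct, mul_sub, Finset.sum_sub_distrib,
            Finset.mul_sum]
          congr 1
          exact Finset.sum_congr rfl fun j _ => by ring
        rw [hlin, hui i, ← mul_sub]
        have h2 : (2 : ℤ) ∣ (u i - HX.mulVec v i) := by
          have : ((u i - HX.mulVec v i : ℤ) : ZMod 2) = 0 := by
            push_cast
            rw [hcast v i]
            have : A2.mulVec (fun j => ((v j : ℤ) : ZMod 2)) i = A2.mulVec w i := by
              congr 1; funext j; exact hvw j
            rw [this, hw]
            ring
          exact (ZMod.intCast_zmod_eq_zero_iff_dvd _ 2).mp this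
        obtain ⟨c, hc⟩ := h2
        rw [hc]
        exact ⟨c, by ring⟩
      · intro j
        have : (2 : ℤ) ∣ 2 ^ (k + 1) * v j :=
          Dvd.dvd.mul_right (dvd_pow_self 2 (Nat.succ_ne_zero k)) _
        obtain ⟨c, hc⟩ := this
        obtain ⟨d, hd⟩ := hφ2 j
        exact ⟨d - c, by rw [sub_sub, sub_eq_iff_eq_add] at *; linarith [hc, hd]⟩
  exact key m
end

section
/- Let H_X, H_Z be integer matrices with H_X H_Z^T ≡ 0 (mod 2^{m+1}), and let θ ∈ Z^n with H_X θ ≡ 0 (mod 2^m). If β_m([θ]) = 0 (i.e., (H_X θ)/2^m mod 2 ∈ Im(H_X mod 2)) then for any boundary shift s ∈ Z^{m_Z}, also β_m([θ + H_Z^T s]) = 0; i.e., vanishing of the obstruction is a property of the homology class, invariant under adding boundaries. -/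
/-- Vanishing of the Bockstein obstruction is invariant under adding boundaries: if the
defect of `θ` lies in `Im (H_X mod 2)`, so does the defect of `θ + H_Zᵀ s`. -/
theorem stmt17 (mX mZ n m : ℕ) (hm : 1 ≤ m)
    (HX : Matrix (Fin mX) (Fin n) ℤ) (HZ : Matrix (Fin mZ) (Fin n) ℤ)
    (hcomm : ∀ i k, (2 ^ (m + 1) : ℤ) ∣ (HX * HZ.transpose) i k)
    (θ : Fin n → ℤ) (hθ : ∀ i, (2 ^ m : ℤ) ∣ HX.mulVec θ i)
    (hvan : ∃ ω : Fin n → ℤ, ∀ i,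
      (2 : ℤ) ∣ (HX.mulVec θ) i / 2 ^ m - HX.mulVec ω i)
    (s : Fin mZ → ℤ) :
    ∃ ω' : Fin n → ℤ, ∀ i,
      (2 : ℤ) ∣ (HX.mulVec (θ + HZ.transpose.mulVec s)) i / 2 ^ m
        - HX.mulVec ω' i := by
  obtain ⟨ω, hω⟩ := hvan
  refine ⟨ω, fun i => ?_⟩
  have hb : (2 ^ (m + 1) : ℤ) ∣ ((HX * HZ.transpose).mulVec s) i := by
    simp only [Matrix.mulVec, dotProduct]
    exact Finset.dvd_sum fun k _ => Dvd.dvd.mul_right (hcomm i k) _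
  obtain ⟨c, hc⟩ := hb
  have hsplit : HX.mulVec (θ + HZ.transpose.mulVec s) i
      = HX.mulVec θ i + ((HX * HZ.transpose).mulVec s) i := by
    rw [← Matrix.mulVec_mulVec]
    simp [Matrix.mulVec_add]
  rw [hsplit, hc]
  have h2m : (0:ℤ) < 2 ^ m := by positivity
  have key : (HX.mulVec θ i + 2 ^ (m + 1) * c) / 2 ^ m
      = HX.mulVec θ i / 2 ^ m + 2 * c := by
    obtain ⟨a, ha⟩ := hθ i
    rw [ha, pow_succ]
    rw [mul_comm ((2:ℤ)^m) 2, mul_assoc, Int.mul_ediv_cancel_left _ h2m.ne',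
      mul_left_comm 2, ← mul_add, Int.mul_ediv_cancel_left _ h2m.ne']
  rw [key]
  have := hω i
  omega
end
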